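/- arXiv:2004.06232 — 7 statements merged into one kernel-verified Lean document; each statement's English description precedes it below -/
import Mathlib

section
/- Ramanujan's identity: ∑_{k=1}^∞ ∑_{j=k}^∞ 1/(k · j² · 2^j) = ζ(3) − (π²/12)·log 2. -/
/-!
With `x = 1/2` the double sum is `∑_{1 ≤ k ≤ j} xʲ / (k j²)`. The diagonal `j = k` gives `Li₃ x`.
Writing `j = a + b`, `k = a` for the rest and symmetrizing in `a, b` turns it into
`½ ∑_{a,b ≥ 1} x^(a+b) / (a b (a+b))`, which, squaring the series of `-log (1 - t)`, is
`½ ∫₀ˣ log²(1-t)/t dt`. Substituting `u = 1 - t` and expanding `1/(1-u)` geometrically evaluates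
this integral through `ζ(3)`, `Li₂(1-x)` and `Li₃(1-x)`. At `x = 1/2` the two `Li₃` cancel, and
`Li₂(1/2) = π²/12 - log²2/2` is Euler's reflection formula, obtained in the same way from
`∫ₓ¹ -log(1-t)/t dt`.
-/

open MeasureTheory Real Set Filter

/-- `polylog s x = Li_s(x) = ∑_{n ≥ 1} xⁿ / nˢ` (so `polylog 3 1 = ζ(3)`); it is `0` where the
series diverges. -/
noncomputable def polylog (s : ℕ) (x : ℝ) : ℝ := ∑' n : ℕ, x ^ (n + 1) / ((n : ℝ) + 1) ^ s

lemma hasSum_polylog_of_abs_lt_one (s : ℕ) {x : ℝ} (hx : |x| < 1) :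
    HasSum (fun n : ℕ => x ^ (n + 1) / ((n : ℝ) + 1) ^ s) (polylog s x) := by
  refine (Summable.of_norm_bounded
    ((summable_geometric_of_lt_one (abs_nonneg x) hx).mul_left |x|) fun n => ?_).hasSum
  rw [norm_div, norm_pow, norm_pow, Real.norm_eq_abs, Real.norm_of_nonneg (by positivity),
    ← pow_succ']
  exact div_le_self (by positivity) (one_le_pow₀ (le_add_of_nonneg_left n.cast_nonneg))

lemma hasSum_polylog_one {s : ℕ} (hs : 2 ≤ s) :
    HasSum (fun n : ℕ => 1 / ((n : ℝ) + 1) ^ s) (polylog s 1) := by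
  have h : Summable fun n : ℕ => 1 / ((n : ℝ) + 1) ^ s := by
    exact_mod_cast (summable_nat_add_iff 1).mpr
      (Real.summable_one_div_nat_pow.mpr (by omega : 1 < s))
  simpa only [polylog, one_pow] using h.hasSum

lemma polylog_two_one : polylog 2 1 = π ^ 2 / 6 := by
  have h := (hasSum_nat_add_iff' 1).mpr hasSum_zeta_two
  simp only [Finset.sum_range_one, Nat.cast_zero, zero_pow two_ne_zero, div_zero, sub_zero,
    Nat.cast_add, Nat.cast_one] at h
  exact (hasSum_polylog_one le_rfl).unique h

lemma hasSum_integral_of_nonneg {α ι : Type*} [MeasurableSpace α] [Countable ι] {μ : Measure α}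
    {F : ι → α → ℝ} {f : α → ℝ} (hF_int : ∀ i, Integrable (F i) μ)
    (hF_nonneg : ∀ i, 0 ≤ᵐ[μ] F i) (hf : ∀ᵐ a ∂μ, HasSum (fun i => F i a) (f a))
    (hF_sum : Summable fun i => ∫ a, F i a ∂μ) :
    HasSum (fun i => ∫ a, F i a ∂μ) (∫ a, f a ∂μ) := by
  have h_norm : ∀ i, ∫ a, ‖F i a‖ ∂μ = ∫ a, F i a ∂μ := fun i =>
    integral_congr_ae <| (hF_nonneg i).mono fun a ha => Real.norm_of_nonneg ha
  rw [integral_congr_ae (hf.mono fun a ha => ha.tsum_eq.symm)]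
  exact hasSum_integral_of_summable_integral_norm hF_int (by simpa only [h_norm] using hF_sum)

lemma hasSum_intervalIntegral_of_nonneg {ι : Type*} [Countable ι] {F : ι → ℝ → ℝ} {f : ℝ → ℝ}
    {a b : ℝ} (hab : a ≤ b) (hF_int : ∀ i, IntervalIntegrable (F i) volume a b)
    (hF_nonneg : ∀ i, ∀ t ∈ Ioo a b, 0 ≤ F i t)
    (hf : ∀ t ∈ Ioo a b, HasSum (fun i => F i t) (f t))
    (hF_sum : Summable fun i => ∫ t in a..b, F i t) :
    HasSum (fun i => ∫ t in a..b, F i t) (∫ t in a..b, f t) := by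
  simp only [intervalIntegral.integral_of_le hab, integral_Ioc_eq_integral_Ioo] at hF_sum ⊢
  exact hasSum_integral_of_nonneg (fun i => (hF_int i).1.mono_set Ioo_subset_Ioc_self)
    (fun i => ae_restrict_of_forall_mem measurableSet_Ioo (hF_nonneg i))
    (ae_restrict_of_forall_mem measurableSet_Ioo hf) hF_sum

lemma integral_pow_mul_log (n : ℕ) {y : ℝ} (hy : 0 ≤ y) :
    ∫ u in (0)..y, u ^ n * log u = y ^ (n + 1) * (log y / (n + 1) - 1 / ((n : ℝ) + 1) ^ 2) := by
  have hn : (n : ℝ) + 1 ≠ 0 := by positivity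
  let H : ℝ → ℝ := fun u => u ^ n * (u * log u) / (n + 1) - u ^ (n + 1) / ((n : ℝ) + 1) ^ 2
  have hH_cont : Continuous H := by unfold H; fun_prop (disch := exact continuous_mul_log)
  have hH_deriv : ∀ u ∈ Ioo 0 y, HasDerivAt H (u ^ n * log u) u := by
    intro u hu
    have h := (((hasDerivAt_pow (n + 1) u).mul (hasDerivAt_log hu.1.ne')).div_const
      ((n : ℝ) + 1)).sub ((hasDerivAt_pow (n + 1) u).div_const (((n : ℝ) + 1) ^ 2))
    have hH : H = fun u => u ^ (n + 1) * log u / (n + 1) - u ^ (n + 1) / ((n : ℝ) + 1) ^ 2 := by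
      funext v; simp only [H]; ring
    rw [hH]
    refine h.congr_deriv ?_
    have := hu.1.ne'
    simp only [Nat.add_sub_cancel, Nat.cast_add, Nat.cast_one]
    field_simp
    ring
  rw [intervalIntegral.integral_eq_sub_of_hasDerivAt_of_le hy hH_cont.continuousOn hH_deriv
    (intervalIntegral.intervalIntegrable_log'.continuousOn_mul (continuous_pow n).continuousOn)]
  simp only [H]
  ring

lemma integral_pow_mul_log_sq (n : ℕ) {y : ℝ} (hy : 0 < y) :
    ∫ u in y..1, u ^ n * log u ^ 2 = 2 / ((n : ℝ) + 1) ^ 3 - y ^ (n + 1) *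
      (log y ^ 2 / (n + 1) - 2 * log y / ((n : ℝ) + 1) ^ 2 + 2 / ((n : ℝ) + 1) ^ 3) := by
  have hn : (n : ℝ) + 1 ≠ 0 := by positivity
  have h_pos : ∀ u ∈ uIcc y 1, 0 < u := fun u hu =>
    lt_of_lt_of_le (lt_min hy one_pos) (min_le_iff.mpr (by simpa using hu.1))
  let H : ℝ → ℝ := fun u =>
    u ^ (n + 1) * (log u ^ 2 / (n + 1) - 2 * log u / ((n : ℝ) + 1) ^ 2 + 2 / ((n : ℝ) + 1) ^ 3)
  have hH_deriv : ∀ u ∈ uIcc y 1, HasDerivAt H (u ^ n * log u ^ 2) u := by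
    intro u hu
    have hlog := hasDerivAt_log (h_pos u hu).ne'
    have h := (hasDerivAt_pow (n + 1) u).mul
      ((((hlog.pow 2).div_const ((n : ℝ) + 1)).sub
        ((hlog.const_mul 2).div_const (((n : ℝ) + 1) ^ 2))).add_const (2 / ((n : ℝ) + 1) ^ 3))
    refine h.congr_deriv ?_
    have := (h_pos u hu).ne'
    simp only [Nat.add_sub_cancel, Nat.cast_add, Nat.cast_one, Nat.cast_ofNat, Pi.sub_apply,
      Pi.pow_apply]
    field_simp
    ring
  have h_cont : ContinuousOn (fun u => u ^ n * log u ^ 2) (uIcc y 1) :=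
    (continuous_pow n).continuousOn.mul
      ((continuousOn_log.mono fun u hu => (h_pos u hu).ne').pow 2)
  rw [intervalIntegral.integral_eq_sub_of_hasDerivAt hH_deriv h_cont.intervalIntegrable]
  simp only [H, log_one]
  ring

lemma integral_neg_log_one_sub_div {x : ℝ} (hx0 : 0 ≤ x) (hx1 : x < 1) :
    ∫ t in x..1, -log (1 - t) / t = π ^ 2 / 6 - polylog 2 x := by
  have h_int : HasSum (fun n : ℕ => ∫ t in x..1, t ^ n / ((n : ℝ) + 1))
      (π ^ 2 / 6 - polylog 2 x) := by
    have h1 := polylog_two_one ▸ hasSum_polylog_one le_rfl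
    have hx := hasSum_polylog_of_abs_lt_one 2 (abs_lt.mpr ⟨by linarith, hx1⟩)
    refine (h1.sub hx).congr_fun fun n => ?_
    rw [intervalIntegral.integral_div, integral_pow, one_pow]
    field_simp
  refine (hasSum_intervalIntegral_of_nonneg hx1.le (fun n => ?_) (fun n t ht => ?_)
    (fun t ht => ?_) h_int.summable).unique h_int
  · exact ((continuous_pow n).div_const _).intervalIntegrable _ _
  · have := hx0.trans ht.1.le
    positivity
  · have ht0 : t ≠ 0 := (hx0.trans_lt ht.1).ne'
    refine ((hasSum_pow_div_log_of_abs_lt_one (abs_lt.mpr ⟨by linarith [ht.1], ht.2⟩)).div_const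
      t).congr_fun fun n => ?_
    field_simp
    ring

lemma integral_neg_log_div_one_sub {y : ℝ} (hy0 : 0 ≤ y) (hy1 : y < 1) :
    ∫ u in (0)..y, -log u / (1 - u) = log y * log (1 - y) + polylog 2 y := by
  have hy : |y| < 1 := abs_lt.mpr ⟨by linarith, hy1⟩
  have h_int : HasSum (fun n : ℕ => ∫ u in (0)..y, -(u ^ n * log u))
      (log y * log (1 - y) + polylog 2 y) := by
    have h := ((hasSum_pow_div_log_of_abs_lt_one hy).mul_left (-log y)).add
      (hasSum_polylog_of_abs_lt_one 2 hy)
    rw [neg_mul_neg] at h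
    refine h.congr_fun fun n => ?_
    rw [intervalIntegral.integral_neg, integral_pow_mul_log n hy0]
    ring
  refine (hasSum_intervalIntegral_of_nonneg hy0 (fun n => ?_) (fun n u hu => ?_)
    (fun u hu => ?_) h_int.summable).unique h_int
  · exact (intervalIntegral.intervalIntegrable_log'.continuousOn_mul
      (continuous_pow n).continuousOn).neg
  · rw [neg_nonneg]
    exact mul_nonpos_of_nonneg_of_nonpos (pow_nonneg hu.1.le n)
      (log_nonpos hu.1.le (hu.2.trans hy1).le)
  · refine ((hasSum_geometric_of_lt_one hu.1.le (hu.2.trans hy1)).mul_left (-log u)).congr_fun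
      fun n => ?_
    ring

theorem polylog_two_add_polylog_two_one_sub {x : ℝ} (hx0 : 0 < x) (hx1 : x < 1) :
    polylog 2 x + polylog 2 (1 - x) = π ^ 2 / 6 - log x * log (1 - x) := by
  have h_subst : ∫ t in x..1, -log (1 - t) / t = ∫ u in (0)..1 - x, -log u / (1 - u) := by
    simpa only [sub_sub_cancel, sub_self] using
      intervalIntegral.integral_comp_sub_left (fun u => -log u / (1 - u)) (a := x) (b := 1) 1
  rw [integral_neg_log_one_sub_div hx0.le hx1, integral_neg_log_div_one_sub (by linarith)
    (by linarith), sub_sub_cancel] at h_subst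
  linarith

lemma integral_log_sq_div_one_sub {y : ℝ} (hy0 : 0 < y) (hy1 : y < 1) :
    ∫ u in y..1, log u ^ 2 / (1 - u) =
      2 * polylog 3 1 + log y ^ 2 * log (1 - y) + 2 * log y * polylog 2 y - 2 * polylog 3 y := by
  have hy : |y| < 1 := abs_lt.mpr ⟨by linarith, hy1⟩
  have h_int : HasSum (fun n : ℕ => ∫ u in y..1, u ^ n * log u ^ 2)
      (2 * polylog 3 1 + log y ^ 2 * log (1 - y) + 2 * log y * polylog 2 y - 2 * polylog 3 y) := by
    have h := ((((hasSum_polylog_one (by norm_num : 2 ≤ 3)).mul_left 2).sub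
      ((hasSum_pow_div_log_of_abs_lt_one hy).mul_left (log y ^ 2))).add
      ((hasSum_polylog_of_abs_lt_one 2 hy).mul_left (2 * log y))).sub
      ((hasSum_polylog_of_abs_lt_one 3 hy).mul_left 2)
    rw [mul_neg, sub_neg_eq_add] at h
    refine h.congr_fun fun n => ?_
    rw [integral_pow_mul_log_sq n hy0]
    ring
  refine (hasSum_intervalIntegral_of_nonneg hy1.le (fun n => ?_) (fun n u hu => ?_)
    (fun u hu => ?_) h_int.summable).unique h_int
  · exact ((continuous_pow n).continuousOn.mul ((continuousOn_log.mono
      (subset_compl_singleton_iff.mpr (notMem_uIcc_of_lt hy0 one_pos))).pow 2)).intervalIntegrable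
  · have := hy0.trans hu.1
    positivity
  · simpa only [inv_mul_eq_div] using
      (hasSum_geometric_of_lt_one (hy0.trans hu.1).le hu.2).mul_right (log u ^ 2)

lemma summable_pow_add_div {x : ℝ} (hx0 : 0 ≤ x) (hx1 : x < 1) {d : ℕ × ℕ → ℝ}
    (hd : ∀ p, 1 ≤ d p) : Summable fun p : ℕ × ℕ => x ^ (p.1 + p.2 + 2) / d p := by
  have hg : Summable fun n : ℕ => x ^ (n + 1) := by
    simpa only [pow_succ] using (summable_geometric_of_lt_one hx0 hx1).mul_right x
  refine Summable.of_nonneg_of_le (fun p => div_nonneg (by positivity) (zero_le_one.trans (hd p)))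
    (fun p => ?_) (hg.mul_of_nonneg hg (fun n => by positivity) (fun n => by positivity))
  rw [← pow_add, show p.1 + 1 + (p.2 + 1) = p.1 + p.2 + 2 by omega]
  exact div_le_self (by positivity) (hd p)

lemma hasSum_integral_log_one_sub_sq_div {x : ℝ} (hx0 : 0 ≤ x) (hx1 : x < 1) :
    HasSum (fun p : ℕ × ℕ =>
      x ^ (p.1 + p.2 + 2) / (((p.1 : ℝ) + 1) * ((p.2 : ℝ) + 1) * ((p.1 : ℝ) + p.2 + 2)))
      (∫ t in (0)..x, log (1 - t) ^ 2 / t) := by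
  let F : ℕ × ℕ → ℝ → ℝ := fun p t => t ^ (p.1 + p.2 + 1) / (((p.1 : ℝ) + 1) * ((p.2 : ℝ) + 1))
  have h_int : ∀ p : ℕ × ℕ, ∫ t in (0)..x, F p t =
      x ^ (p.1 + p.2 + 2) / (((p.1 : ℝ) + 1) * ((p.2 : ℝ) + 1) * ((p.1 : ℝ) + p.2 + 2)) := by
    intro p
    simp only [F]
    rw [intervalIntegral.integral_div, integral_pow, zero_pow (by omega), sub_zero]
    push_cast
    field_simp
    ring
  simp only [← h_int]
  refine hasSum_intervalIntegral_of_nonneg hx0 (fun p => ?_) (fun p t ht => ?_)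
    (fun t ht => ?_) ?_
  · exact ((continuous_pow _).div_const _).intervalIntegrable _ _
  · have := ht.1.le
    positivity
  · have ht1 : |t| < 1 := abs_lt.mpr ⟨by linarith [ht.1], ht.2.trans hx1⟩
    have h := hasSum_pow_div_log_of_abs_lt_one ht1
    have h_nonneg : 0 ≤ fun n : ℕ => t ^ (n + 1) / ((n : ℝ) + 1) := fun n => by
      have := ht.1.le
      positivity
    have h_sq := (h.mul h (h.summable.mul_of_nonneg h.summable h_nonneg h_nonneg)).div_const t
    rw [neg_mul_neg, ← sq] at h_sq
    refine h_sq.congr_fun fun p => ?_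
    have := ht.1.ne'
    simp only [F]
    field_simp
    ring
  · simp only [h_int]
    refine summable_pow_add_div hx0 hx1 fun p => ?_
    have ha : (0 : ℝ) ≤ p.1 := p.1.cast_nonneg
    have hb : (0 : ℝ) ≤ p.2 := p.2.cast_nonneg
    exact one_le_mul_of_one_le_of_one_le
      (one_le_mul_of_one_le_of_one_le (by linarith) (by linarith)) (by linarith)

lemma summable_pow_div_mul_sq {x : ℝ} (hx0 : 0 ≤ x) (hx1 : x < 1) :
    Summable fun p : ℕ × ℕ =>
      x ^ (p.1 + p.2 + 2) / (((p.1 : ℝ) + 1) * ((p.1 : ℝ) + p.2 + 2) ^ 2) := by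
  refine summable_pow_add_div hx0 hx1 fun p => ?_
  have ha : (0 : ℝ) ≤ p.1 := p.1.cast_nonneg
  have hb : (0 : ℝ) ≤ p.2 := p.2.cast_nonneg
  exact one_le_mul_of_one_le_of_one_le (by linarith) (one_le_pow₀ (by linarith))

lemma two_mul_tsum_pow_div_mul_sq {x : ℝ} (hx0 : 0 ≤ x) (hx1 : x < 1) :
    2 * ∑' p : ℕ × ℕ, x ^ (p.1 + p.2 + 2) / (((p.1 : ℝ) + 1) * ((p.1 : ℝ) + p.2 + 2) ^ 2) =
      ∫ t in (0)..x, log (1 - t) ^ 2 / t := by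
  have h := (summable_pow_div_mul_sq hx0 hx1).hasSum
  rw [two_mul]
  refine ((h.add ((Equiv.prodComm ℕ ℕ).hasSum_iff.mpr h)).congr_fun fun p => ?_).unique
    (hasSum_integral_log_one_sub_sq_div hx0 hx1)
  simp only [Function.comp_apply, Equiv.prodComm_apply, Prod.fst_swap, Prod.snd_swap]
  rw [show p.2 + p.1 + 2 = p.1 + p.2 + 2 by omega]
  have : (p.1 : ℝ) + p.2 + 2 ≠ 0 := by positivity
  field_simp
  ring

theorem tsum_tsum_pow_div_mul_sq {x : ℝ} (hx0 : 0 < x) (hx1 : x < 1) :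
    ∑' k : ℕ, ∑' j : ℕ, x ^ (j + k + 1) / (((k : ℝ) + 1) * ((j : ℝ) + k + 1) ^ 2) =
      polylog 3 1 + polylog 3 x - polylog 3 (1 - x) + log (1 - x) * polylog 2 (1 - x)
        + log x * log (1 - x) ^ 2 / 2 := by
  let G : ℕ × ℕ → ℝ := fun p => x ^ (p.1 + p.2 + 2) / (((p.1 : ℝ) + 1) * ((p.1 : ℝ) + p.2 + 2) ^ 2)
  have hG : Summable G := summable_pow_div_mul_sq hx0.le hx1
  have h_fiber : ∀ k : ℕ, ∑' j : ℕ, x ^ (j + k + 1) / (((k : ℝ) + 1) * ((j : ℝ) + k + 1) ^ 2) =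
      x ^ (k + 1) / ((k : ℝ) + 1) ^ 3 + ∑' j : ℕ, G (k, j) := by
    intro k
    have h_shift : ∀ j : ℕ, x ^ (j + 1 + k + 1) / (((k : ℝ) + 1) * (((j + 1 : ℕ) : ℝ) + k + 1) ^ 2)
        = G (k, j) := fun j => by
      simp only [G]
      rw [show j + 1 + k + 1 = k + j + 2 by omega]
      push_cast
      ring
    rw [tsum_eq_zero_add' ((hG.prod_factor k).congr fun j => (h_shift j).symm),
      tsum_congr h_shift]
    push_cast
    ring
  have h_sum := (hasSum_polylog_of_abs_lt_one 3 (abs_lt.mpr ⟨by linarith, hx1⟩)).add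
    (hG.hasSum.prod_fiberwise fun k => (hG.prod_factor k).hasSum)
  have h_two := two_mul_tsum_pow_div_mul_sq hx0.le hx1
  have h_subst : ∫ t in (0)..x, log (1 - t) ^ 2 / t = ∫ u in (1 - x)..1, log u ^ 2 / (1 - u) := by
    simpa only [sub_sub_cancel, sub_zero] using
      intervalIntegral.integral_comp_sub_left (fun u => log u ^ 2 / (1 - u)) (a := 0) (b := x) 1
  rw [h_subst, integral_log_sq_div_one_sub (by linarith) (by linarith), sub_sub_cancel] at h_two
  rw [tsum_congr h_fiber, h_sum.tsum_eq]
  linarith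

theorem ramanujan_double_sum :
    (∑' k : ℕ, ∑' j : ℕ,
      (1:ℝ) / (((k:ℝ) + 1) * ((j:ℝ) + (k:ℝ) + 1) ^ 2 * 2 ^ (j + k + 1)))
    = (∑' n : ℕ, 1 / ((n:ℝ) + 1) ^ 3) - (Real.pi ^ 2 / 12) * Real.log 2 := by
  have h_half : (1 : ℝ) - 1 / 2 = 1 / 2 := by norm_num
  have h_log : log (1 / 2 : ℝ) = -log 2 := by rw [one_div, log_inv]
  have h_gen := tsum_tsum_pow_div_mul_sq (x := 1 / 2) (by norm_num) (by norm_num)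
  have h_refl := polylog_two_add_polylog_two_one_sub (x := 1 / 2) (by norm_num) (by norm_num)
  rw [h_half, h_log] at h_gen h_refl
  have h_lhs : ∀ k j : ℕ, (1 : ℝ) / (((k : ℝ) + 1) * ((j : ℝ) + k + 1) ^ 2 * 2 ^ (j + k + 1)) =
      (1 / 2) ^ (j + k + 1) / (((k : ℝ) + 1) * ((j : ℝ) + k + 1) ^ 2) := fun k j => by
    rw [one_div_pow]
    field_simp
  simp only [h_lhs, h_gen, (hasSum_polylog_one (by norm_num : 2 ≤ 3)).tsum_eq]
  linear_combination (-log 2 / 2) * h_refl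
end

section
/- The double integral ∫₁^∞ ∫₀¹ 1/(x(x+y)) dy dx equals (1/2)·ζ(2) = π²/12. -/
/-!
For `x > 0` the inner integral is `log (1 + x⁻¹) / x`. For `x > 1` this expands as
`∑ (-1)ⁿ / ((n + 1) xⁿ⁺²)`, whose terms have absolutely summable integrals over `(1, ∞)`, so
integrating termwise gives `η(2) = ∑ (-1)ⁿ / (n + 1)²`. Removing twice the even terms from `ζ(2)`
gives `η(2) = ζ(2) - 2 · ζ(2) / 4 = π² / 12`.
-/

open MeasureTheory Real Set

theorem HasSum.alternating {R : Type*} [Ring R] [TopologicalSpace R] [IsTopologicalRing R]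
    {f : ℕ → R} {a b : R} (hf : HasSum f a) (heven : HasSum (fun k ↦ f (2 * k)) b) :
    HasSum (fun n ↦ (-1) ^ n * f n) (2 * b - a) := by
  have hevenPart : HasSum (fun n ↦ if Even n then f n else 0) b := by
    refine add_zero b ▸ HasSum.even_add_odd ?_ ?_ <;> simp [heven]
  refine ((hevenPart.mul_left 2).sub hf).congr_fun fun n ↦ ?_
  rcases Nat.even_or_odd n with hn | hn
  · simp [hn, hn.neg_one_pow, two_mul]
  · simp [hn.neg_one_pow, Nat.not_even_iff_odd.mpr hn]

theorem hasSum_alternating_inv_sq :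
    HasSum (fun n : ℕ ↦ (-1 : ℝ) ^ n / ((n : ℝ) + 1) ^ 2) (π ^ 2 / 12) := by
  have heven : HasSum (fun k : ℕ ↦ 1 / ((2 * k : ℕ) : ℝ) ^ 2) (1 / 4 * (π ^ 2 / 6)) :=
    (hasSum_zeta_two.mul_left (1 / 4)).congr_fun fun k ↦ by push_cast; ring
  have h := (hasSum_zeta_two.alternating heven).neg
  -- the `n = 0` term of `hasSum_zeta_two` is the junk value `1 / 0 ^ 2 = 0`
  rw [← hasSum_nat_add_iff' 1, Finset.sum_range_one] at h
  have h' : HasSum (fun n : ℕ ↦ (-1 : ℝ) ^ n / ((n : ℝ) + 1) ^ 2) _ :=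
    h.congr_fun fun n ↦ by push_cast; ring
  convert h' using 1
  norm_num
  ring

theorem integral_Ioo_zero_one_one_div_mul_add {x : ℝ} (hx : 0 < x) :
    ∫ y in Ioo (0 : ℝ) 1, 1 / (x * (x + y)) = log (1 + x⁻¹) / x := by
  have hshift : ∫ y in (0 : ℝ)..1, (x + y)⁻¹ = ∫ u in x..x + 1, u⁻¹ := by
    simp [intervalIntegral.integral_comp_add_left (fun u ↦ u⁻¹) x (a := 0) (b := 1)]
  rw [← integral_Ioc_eq_integral_Ioo, ← intervalIntegral.integral_of_le zero_le_one]
  simp_rw [one_div, mul_inv]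
  rw [intervalIntegral.integral_const_mul, hshift, integral_inv_of_pos hx (by linarith),
    add_div, div_self hx.ne', one_div, inv_mul_eq_div]

theorem hasSum_log_one_add_inv_div {x : ℝ} (hx : 1 < x) :
    HasSum (fun n : ℕ ↦ (-1) ^ n / ((n : ℝ) + 1) * (x ^ (n + 2))⁻¹) (log (1 + x⁻¹) / x) := by
  have hlog := Real.hasSum_pow_div_log_of_abs_lt_one (x := -x⁻¹)
    (by rw [abs_neg, abs_inv, abs_of_pos (zero_lt_one.trans hx)]; exact inv_lt_one_of_one_lt₀ hx)
  have h := (hlog.mul_left (-x⁻¹)).congr_fun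
    (g := fun n : ℕ ↦ (-1) ^ n / ((n : ℝ) + 1) * (x ^ (n + 2))⁻¹) fun n ↦ by
      rw [neg_pow x⁻¹, inv_pow]; ring
  rwa [sub_neg_eq_add, neg_mul_neg, inv_mul_eq_div] at h

theorem inv_pow_eqOn_rpow_neg (n : ℕ) :
    EqOn (fun x : ℝ ↦ (x ^ n)⁻¹) (fun x ↦ x ^ (-(n : ℝ))) (Ioi 0) := fun x hx ↦ by
  simp [rpow_neg (le_of_lt hx)]

theorem integrableOn_Ioi_one_inv_pow (n : ℕ) :
    IntegrableOn (fun x : ℝ ↦ (x ^ (n + 2))⁻¹) (Ioi 1) := by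
  refine (integrableOn_Ioi_rpow_of_lt ?_ one_pos).congr_fun
    ((inv_pow_eqOn_rpow_neg (n + 2)).mono (Ioi_subset_Ioi zero_le_one)).symm measurableSet_Ioi
  push_cast
  linarith [n.cast_nonneg (α := ℝ)]

theorem integral_Ioi_one_inv_pow (n : ℕ) :
    ∫ x in Ioi (1 : ℝ), (x ^ (n + 2))⁻¹ = 1 / ((n : ℝ) + 1) := by
  rw [setIntegral_congr_fun measurableSet_Ioi
    ((inv_pow_eqOn_rpow_neg (n + 2)).mono (Ioi_subset_Ioi zero_le_one)),
    integral_Ioi_rpow_of_lt (by push_cast; linarith [n.cast_nonneg (α := ℝ)]) one_pos, one_rpow,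
    show -((n + 2 : ℕ) : ℝ) + 1 = -((n : ℝ) + 1) by push_cast; ring, neg_div_neg_eq]

theorem hasSum_integral_Ioi_one_log_one_add_inv_div :
    HasSum (fun n : ℕ ↦ (-1 : ℝ) ^ n / ((n : ℝ) + 1) ^ 2)
      (∫ x in Ioi (1 : ℝ), log (1 + x⁻¹) / x) := by
  set F : ℕ → ℝ → ℝ := fun n x ↦ (-1) ^ n / ((n : ℝ) + 1) * (x ^ (n + 2))⁻¹
  have hnorm (n : ℕ) : ∫ x in Ioi (1 : ℝ), ‖F n x‖ = 1 / ((n : ℝ) + 1) ^ 2 := by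
    rw [setIntegral_congr_fun measurableSet_Ioi (g := fun x ↦ 1 / ((n : ℝ) + 1) * (x ^ (n + 2))⁻¹)
      fun x hx ↦ ?_, integral_const_mul, integral_Ioi_one_inv_pow, one_div_mul_one_div, sq]
    simp only [F, norm_mul, norm_div, norm_inv, norm_pow, norm_neg, norm_one, one_pow,
      Real.norm_eq_abs, abs_of_pos (zero_lt_one.trans (mem_Ioi.mp hx)),
      abs_of_pos (n.cast_add_one_pos (α := ℝ))]
  have hsummable : Summable fun n ↦ ∫ x in Ioi (1 : ℝ), ‖F n x‖ :=
    ((summable_nat_add_iff 1).mpr hasSum_zeta_two.summable).congr fun n ↦ by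
      rw [hnorm]; push_cast; rfl
  have hsum := hasSum_integral_of_summable_integral_norm
    (fun n ↦ (integrableOn_Ioi_one_inv_pow n).const_mul ((-1) ^ n / ((n : ℝ) + 1))) hsummable
  rw [setIntegral_congr_fun measurableSet_Ioi fun x hx ↦ (hasSum_log_one_add_inv_div hx).tsum_eq]
    at hsum
  refine hsum.congr_fun fun n ↦ ?_
  rw [integral_const_mul, integral_Ioi_one_inv_pow, div_mul_div_comm, mul_one, sq]

theorem double_integral_Z2 :
    (∫ x in Set.Ioi (1:ℝ), ∫ y in Set.Ioo (0:ℝ) 1, 1 / (x * (x + y)))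
    = Real.pi ^ 2 / 12 := by
  rw [setIntegral_congr_fun measurableSet_Ioi
    fun x hx ↦ integral_Ioo_zero_one_one_div_mul_add (zero_lt_one.trans hx)]
  exact hasSum_integral_Ioi_one_log_one_add_inv_div.unique hasSum_alternating_inv_sq
end

section
/- The double integral ∫₀¹ ∫₀¹ 1/(1+xy) dy dx over the unit square equals (1/2)·ζ(2) = π²/12. -/
/-!
For `0 < x < 1` the inner integral is `log (1 + x) / x = ∑ (-1)ⁿ xⁿ / (n + 1)`. Integrating this
series termwise over `(0, 1)` (legitimate because `∑ 1 / (n + 1)²` converges) gives the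
alternating series `∑ (-1)ⁿ / (n + 1)²`, whose value is `ζ(2) - 2 · ζ(2) / 4 = π² / 12`: its odd
terms are a quarter of the whole series `∑ 1 / (n + 1)² = ζ(2)`.
-/

open Real MeasureTheory Set

theorem HasSum.neg_one_pow_mul {R : Type*} [NormedRing R] [CompleteSpace R] {f : ℕ → R} {a b : R}
    (hf : HasSum f a) (hodd : HasSum (fun k ↦ f (2 * k + 1)) b) :
    HasSum (fun n ↦ (-1) ^ n * f n) (a - 2 * b) := by
  obtain ⟨e, heven⟩ := hf.summable.comp_injective (mul_right_injective₀ (two_ne_zero' ℕ))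
  have he : e = a - b := eq_sub_of_add_eq ((heven.even_add_odd hodd).unique hf)
  convert HasSum.even_add_odd (f := fun n ↦ (-1) ^ n * f n)
    (by simpa [pow_mul, Function.comp_def, he] using heven)
    (by simpa [pow_succ, pow_mul] using hodd.neg) using 1
  rw [two_mul]; abel

theorem hasSum_one_div_nat_add_one_sq :
    HasSum (fun n : ℕ ↦ 1 / ((n : ℝ) + 1) ^ 2) (π ^ 2 / 6) := by
  simpa using (hasSum_nat_add_iff' 1).mpr hasSum_zeta_two

theorem hasSum_neg_one_pow_div_nat_add_one_sq :
    HasSum (fun n : ℕ ↦ (-1) ^ n / ((n : ℝ) + 1) ^ 2) (π ^ 2 / 12) := by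
  have hodd : HasSum (fun k : ℕ ↦ 1 / (((2 * k + 1 : ℕ) : ℝ) + 1) ^ 2) (π ^ 2 / 24) := by
    have h := hasSum_one_div_nat_add_one_sq.div_const 4
    rw [show π ^ 2 / 6 / 4 = π ^ 2 / 24 by ring] at h
    refine h.congr_fun fun k ↦ ?_
    push_cast
    field_simp
    ring
  have h := hasSum_one_div_nat_add_one_sq.neg_one_pow_mul hodd
  rw [show π ^ 2 / 6 - 2 * (π ^ 2 / 24) = π ^ 2 / 12 by ring] at h
  exact h.congr_fun fun n ↦ (mul_one_div _ _).symm

theorem Real.hasSum_log_one_add_div {x : ℝ} (h : |x| < 1) (hx0 : x ≠ 0) :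
    HasSum (fun n : ℕ ↦ (-1) ^ n / (n + 1) * x ^ n) (log (1 + x) / x) := by
  have h := ((hasSum_pow_div_log_of_abs_lt_one (x := -x) (by rwa [abs_neg])).neg).div_const x
  rw [neg_neg, sub_neg_eq_add] at h
  refine h.congr_fun fun n ↦ ?_
  rw [neg_pow, pow_succ]
  field_simp
  ring

theorem integral_one_div_one_add_mul {x : ℝ} (hx : -1 < x) (hx0 : x ≠ 0) :
    ∫ y in (0 : ℝ)..1, 1 / (1 + x * y) = log (1 + x) / x := by
  have h := intervalIntegral.integral_comp_mul_left (fun t : ℝ ↦ 1 / (1 + t)) hx0 (a := 0) (b := 1)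
  simp only [mul_zero, mul_one, smul_eq_mul] at h
  rw [h, intervalIntegral.integral_comp_add_left (fun u : ℝ ↦ 1 / u), integral_one_div]
  · rw [add_zero, div_one, div_eq_inv_mul]
  · exact notMem_uIcc_of_lt (by linarith) (by linarith)

theorem integral_Ioo_eq_intervalIntegral {a b : ℝ} (hab : a ≤ b) (f : ℝ → ℝ) :
    ∫ x in Ioo a b, f x = ∫ x in a..b, f x := by
  rw [← integral_Ioc_eq_integral_Ioo, intervalIntegral.integral_of_le hab]

theorem integral_Ioo_zero_one_pow (n : ℕ) : ∫ x in Ioo (0 : ℝ) 1, x ^ n = 1 / (n + 1) := by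
  rw [integral_Ioo_eq_intervalIntegral zero_le_one, integral_pow]
  simp

theorem integral_Ioo_zero_one_tsum_mul_pow {a : ℕ → ℝ} (ha : Summable fun n ↦ |a n| / (n + 1)) :
    ∫ x in Ioo (0 : ℝ) 1, ∑' n, a n * x ^ n = ∑' n, a n / (n + 1) := by
  have hint (n : ℕ) : IntegrableOn (fun x : ℝ ↦ a n * x ^ n) (Ioo 0 1) :=
    (continuous_const.mul (continuous_pow n)).integrableOn_Icc.mono_set Ioo_subset_Icc_self
  have hnorm (n : ℕ) : ∫ x in Ioo (0 : ℝ) 1, ‖a n * x ^ n‖ = |a n| / (n + 1) := by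
    rw [setIntegral_congr_fun measurableSet_Ioo (g := fun x ↦ |a n| * x ^ n)
      fun x hx ↦ by simp [abs_of_pos hx.1], integral_const_mul, integral_Ioo_zero_one_pow,
      mul_one_div]
  rw [← integral_tsum_of_summable_integral_norm hint (by simpa only [hnorm])]
  simp_rw [integral_const_mul, integral_Ioo_zero_one_pow, mul_one_div]

theorem unit_square_integral :
    (∫ x in Set.Ioo (0:ℝ) 1, ∫ y in Set.Ioo (0:ℝ) 1, 1 / (1 + x * y))
    = Real.pi ^ 2 / 12 := by
  have hinner : ∀ x ∈ Ioo (0 : ℝ) 1,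
      ∫ y in Ioo (0 : ℝ) 1, 1 / (1 + x * y) = ∑' n : ℕ, (-1) ^ n / (n + 1) * x ^ n :=
    fun x ⟨hx0, hx1⟩ ↦ by
      rw [integral_Ioo_eq_intervalIntegral zero_le_one, integral_one_div_one_add_mul (by linarith)
        hx0.ne', (hasSum_log_one_add_div (abs_lt.mpr ⟨by linarith, hx1⟩) hx0.ne').tsum_eq]
  have hsummable : Summable fun n : ℕ ↦ |(-1) ^ n / ((n : ℝ) + 1)| / (n + 1) := by
    refine hasSum_one_div_nat_add_one_sq.summable.congr fun n ↦ ?_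
    rw [abs_div, abs_neg_one_pow, abs_of_pos n.cast_add_one_pos, div_div, ← sq]
  calc (∫ x in Ioo (0 : ℝ) 1, ∫ y in Ioo (0 : ℝ) 1, 1 / (1 + x * y))
      = ∫ x in Ioo (0 : ℝ) 1, ∑' n : ℕ, (-1) ^ n / (n + 1) * x ^ n :=
        setIntegral_congr_fun measurableSet_Ioo hinner
    _ = ∑' n : ℕ, (-1) ^ n / ((n : ℝ) + 1) ^ 2 := by
        rw [integral_Ioo_zero_one_tsum_mul_pow hsummable]
        simp_rw [div_div, ← sq]
    _ = π ^ 2 / 12 := hasSum_neg_one_pow_div_nat_add_one_sq.tsum_eq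
end

section
/- The triple integral ∫₀¹ ∫₀¹ ∫₀¹ 1/(1 + xyz) dx dy dz equals (3/4)·ζ(3). -/
open MeasureTheory Set

/-- Integral of `p x^{2k} - q x^{2k+1}` over `(0,1)`. -/
lemma intg_aux (k : ℕ) (p q : ℝ) :
    ∫ x in Set.Ioo (0:ℝ) 1, (p * x ^ (2*k) - q * x ^ (2*k+1))
      = p / (2*(k:ℝ)+1) - q / (2*(k:ℝ)+2) := by
  rw [← MeasureTheory.integral_Ioc_eq_integral_Ioo,
    ← intervalIntegral.integral_of_le (zero_le_one (α := ℝ)),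
    intervalIntegral.integral_sub, intervalIntegral.integral_const_mul,
    intervalIntegral.integral_const_mul, integral_pow, integral_pow]
  · push_cast
    rw [one_pow, one_pow, zero_pow (by omega), zero_pow (by omega)]
    ring
  · exact (continuous_const.mul (continuous_pow _)).intervalIntegrable _ _
  · exact (continuous_const.mul (continuous_pow _)).intervalIntegrable _ _

lemma nonneg_aux {k : ℕ} {p q x : ℝ} (hq : 0 ≤ q) (hpq : q ≤ p) (hx : x ∈ Set.Ioo (0:ℝ) 1) :
    0 ≤ p * x ^ (2*k) - q * x ^ (2*k+1) := by
  have h1 : x ^ (2*k+1) ≤ x ^ (2*k) := pow_le_pow_of_le_one hx.1.le hx.2.le (by omega)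
  have h2 : (0:ℝ) ≤ x ^ (2*k+1) := pow_nonneg hx.1.le _
  nlinarith [pow_nonneg hx.1.le (2*k)]

lemma integrable_aux (k : ℕ) (p q : ℝ) :
    IntegrableOn (fun x : ℝ => p * x ^ (2*k) - q * x ^ (2*k+1)) (Set.Ioo 0 1) := by
  have : Continuous fun x : ℝ => p * x ^ (2*k) - q * x ^ (2*k+1) := by continuity
  exact (this.integrableOn_Icc (a := 0) (b := 1)).mono_set Set.Ioo_subset_Icc_self

lemma denom_pos1 (k : ℕ) : (0:ℝ) < 2*(k:ℝ)+1 := by positivity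
lemma denom_le (k : ℕ) : (2*(k:ℝ)+1) ≤ 2*(k:ℝ)+2 := by linarith

/-- Term-by-term integration of the series over `(0,1)`. -/
lemma step_aux (p q : ℕ → ℝ) (hq : ∀ k, 0 ≤ q k) (hpq : ∀ k, q k ≤ p k)
    (hsum : Summable p) :
    ∫ x in Set.Ioo (0:ℝ) 1, ∑' k : ℕ, (p k * x ^ (2*k) - q k * x ^ (2*k+1))
      = ∑' k : ℕ, (p k / (2*(k:ℝ)+1) - q k / (2*(k:ℝ)+2)) := by
  have hp : ∀ k, 0 ≤ p k := fun k => (hq k).trans (hpq k)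
  have hnormval : ∀ k : ℕ, (∫ x in Set.Ioo (0:ℝ) 1, ‖p k * x ^ (2*k) - q k * x ^ (2*k+1)‖)
      = p k / (2*(k:ℝ)+1) - q k / (2*(k:ℝ)+2) := by
    intro k
    rw [MeasureTheory.setIntegral_congr_fun measurableSet_Ioo
      (fun x hx => Real.norm_of_nonneg (nonneg_aux (hq k) (hpq k) hx))]
    exact intg_aux k _ _
  have hval_nonneg : ∀ k : ℕ, 0 ≤ p k / (2*(k:ℝ)+1) - q k / (2*(k:ℝ)+2) := by
    intro k
    rw [sub_nonneg]
    exact div_le_div₀ (hp k) (hpq k) (denom_pos1 k) (denom_le k)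
  have hval_le : ∀ k : ℕ, p k / (2*(k:ℝ)+1) - q k / (2*(k:ℝ)+2) ≤ p k := by
    intro k
    have h1 : p k / (2*(k:ℝ)+1) ≤ p k := div_le_self (hp k) (by linarith [denom_pos1 k, Nat.cast_nonneg (α := ℝ) k])
    have h2 : 0 ≤ q k / (2*(k:ℝ)+2) := div_nonneg (hq k) (by positivity)
    linarith
  have hnorm : Summable fun k : ℕ => ∫ x in Set.Ioo (0:ℝ) 1,
      ‖p k * x ^ (2*k) - q k * x ^ (2*k+1)‖ := by
    simp_rw [hnormval]
    exact Summable.of_nonneg_of_le hval_nonneg hval_le hsum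
  rw [← MeasureTheory.integral_tsum_of_summable_integral_norm
    (fun k => integrable_aux k (p k) (q k)) hnorm]
  exact tsum_congr fun k => intg_aux k _ _

lemma geo_aux {c : ℝ} (hc : c ∈ Set.Ioo (0:ℝ) 1) : Summable fun k : ℕ => c ^ (2*k) := by
  simp_rw [pow_mul]
  exact summable_geometric_of_lt_one (by positivity) (by nlinarith [hc.1, hc.2])

/-- Pointwise series expansion of `1/(1+t)` for `t ∈ (0,1)`. -/
lemma series_aux {t : ℝ} (ht : t ∈ Set.Ioo (0:ℝ) 1) :
    ∑' k : ℕ, (t ^ (2*k) - t ^ (2*k+1)) = 1 / (1 + t) := by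
  have h0 : (0:ℝ) ≤ t ^ 2 := by positivity
  have h1 : t ^ 2 < 1 := by nlinarith [ht.1, ht.2]
  have h : ∀ k : ℕ, t ^ (2*k) - t ^ (2*k+1) = (t^2) ^ k * (1 - t) := by
    intro k; rw [← pow_mul]; ring
  rw [tsum_congr h, tsum_mul_right, tsum_geometric_of_lt_one h0 h1]
  have ha : 1 - t^2 ≠ 0 := by nlinarith [ht.1, ht.2]
  have hb : 1 + t ≠ 0 := by nlinarith [ht.1]
  field_simp
  ring

/-- Inner integral. -/
lemma step1 {c : ℝ} (hc : c ∈ Set.Ioo (0:ℝ) 1) :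
    ∫ x in Set.Ioo (0:ℝ) 1, 1 / (1 + x * c)
      = ∑' k : ℕ, (c ^ (2*k) / (2*(k:ℝ)+1) - c ^ (2*k+1) / (2*(k:ℝ)+2)) := by
  have hpt : ∀ x ∈ Set.Ioo (0:ℝ) 1, 1 / (1 + x * c)
      = ∑' k : ℕ, (c ^ (2*k) * x ^ (2*k) - c ^ (2*k+1) * x ^ (2*k+1)) := by
    intro x hx
    have hxc : x * c ∈ Set.Ioo (0:ℝ) 1 :=
      ⟨mul_pos hx.1 hc.1, by nlinarith [hx.1, hx.2, hc.1, hc.2]⟩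
    rw [← series_aux hxc]
    exact tsum_congr fun k => by rw [mul_pow, mul_pow]; ring
  rw [MeasureTheory.setIntegral_congr_fun measurableSet_Ioo hpt]
  exact step_aux _ _ (fun k => pow_nonneg hc.1.le _)
    (fun k => by
      have : c ^ (2*k+1) ≤ c ^ (2*k) := pow_le_pow_of_le_one hc.1.le hc.2.le (by omega)
      linarith)
    (geo_aux hc)

/-- Middle integral. -/
lemma step2 {z : ℝ} (hz : z ∈ Set.Ioo (0:ℝ) 1) :
    ∫ y in Set.Ioo (0:ℝ) 1, ∫ x in Set.Ioo (0:ℝ) 1, 1 / (1 + x * (y * z))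
      = ∑' k : ℕ, (z ^ (2*k) / (2*(k:ℝ)+1)^2 - z ^ (2*k+1) / (2*(k:ℝ)+2)^2) := by
  have hpt : ∀ y ∈ Set.Ioo (0:ℝ) 1,
      (∫ x in Set.Ioo (0:ℝ) 1, 1 / (1 + x * (y * z)))
      = ∑' k : ℕ, ((z ^ (2*k) / (2*(k:ℝ)+1)) * y ^ (2*k)
          - (z ^ (2*k+1) / (2*(k:ℝ)+2)) * y ^ (2*k+1)) := by
    intro y hy
    have hyz : y * z ∈ Set.Ioo (0:ℝ) 1 :=
      ⟨mul_pos hy.1 hz.1, by nlinarith [hy.1, hy.2, hz.1, hz.2]⟩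
    rw [step1 hyz]
    exact tsum_congr fun k => by rw [mul_pow, mul_pow]; ring
  rw [MeasureTheory.setIntegral_congr_fun measurableSet_Ioo hpt,
    step_aux _ _ (fun k => div_nonneg (pow_nonneg hz.1.le _) (by positivity))
      (fun k => by
        have h1 : z ^ (2*k+1) ≤ z ^ (2*k) := pow_le_pow_of_le_one hz.1.le hz.2.le (by omega)
        exact div_le_div₀ (pow_nonneg hz.1.le _) h1 (denom_pos1 k) (denom_le k))
      (Summable.of_nonneg_of_le (fun k => div_nonneg (pow_nonneg hz.1.le _) (by positivity))
        (fun k => div_le_self (pow_nonneg hz.1.le _)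
          (by linarith [denom_pos1 k, Nat.cast_nonneg (α := ℝ) k]))
        (geo_aux hz))]
  refine tsum_congr fun k => ?_
  have h1 : (2*(k:ℝ)+1) ≠ 0 := by positivity
  have h2 : (2*(k:ℝ)+2) ≠ 0 := by positivity
  field_simp

lemma sq_summable_aux : Summable fun k : ℕ => 1 / ((k:ℝ)+1)^2 := by
  have h := (summable_nat_add_iff 1).2 (Real.summable_one_div_nat_pow.mpr one_lt_two)
  exact h.congr fun k => by push_cast; ring

lemma cube_summable_aux : Summable fun n : ℕ => 1 / ((n:ℝ)+1)^3 := by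
  have h := (summable_nat_add_iff 1).2
    (Real.summable_one_div_nat_pow.mpr (by norm_num : (1:ℕ) < 3))
  exact h.congr fun k => by push_cast; ring

/-- Outer integral. -/
lemma step3 :
    ∫ z in Set.Ioo (0:ℝ) 1,
        ∑' k : ℕ, (z ^ (2*k) / (2*(k:ℝ)+1)^2 - z ^ (2*k+1) / (2*(k:ℝ)+2)^2)
      = ∑' k : ℕ, (1 / (2*(k:ℝ)+1)^3 - 1 / (2*(k:ℝ)+2)^3) := by
  have hpt : ∀ z : ℝ,
      (∑' k : ℕ, (z ^ (2*k) / (2*(k:ℝ)+1)^2 - z ^ (2*k+1) / (2*(k:ℝ)+2)^2))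
      = ∑' k : ℕ, ((1 / (2*(k:ℝ)+1)^2) * z ^ (2*k) - (1 / (2*(k:ℝ)+2)^2) * z ^ (2*k+1)) :=
    fun z => tsum_congr fun k => by ring
  rw [MeasureTheory.setIntegral_congr_fun measurableSet_Ioo (fun z _ => hpt z),
    step_aux _ _ (fun k => by positivity)
      (fun k => by
        have h2 : ((2*(k:ℝ)+1)^2) ≤ (2*(k:ℝ)+2)^2 := by nlinarith [Nat.cast_nonneg (α := ℝ) k]
        exact div_le_div₀ (by norm_num) le_rfl (by positivity) h2)
      (Summable.of_nonneg_of_le (fun k => by positivity)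
        (fun k => by
          have h2 : (((k:ℝ)+1)^2) ≤ (2*(k:ℝ)+1)^2 := by nlinarith [Nat.cast_nonneg (α := ℝ) k]
          exact div_le_div₀ (by norm_num) le_rfl (by positivity) h2)
        sq_summable_aux)]
  refine tsum_congr fun k => ?_
  have h1 : (2*(k:ℝ)+1) ≠ 0 := by positivity
  have h2 : (2*(k:ℝ)+2) ≠ 0 := by positivity
  field_simp

theorem cube_integral_plus :
    (∫ z in Set.Ioo (0:ℝ) 1, ∫ y in Set.Ioo (0:ℝ) 1, ∫ x in Set.Ioo (0:ℝ) 1,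
      1 / (1 + x * y * z))
    = (3/4) * ∑' n : ℕ, 1 / ((n:ℝ) + 1) ^ 3 := by
  have hcongr : ∀ z ∈ Set.Ioo (0:ℝ) 1,
      (∫ y in Set.Ioo (0:ℝ) 1, ∫ x in Set.Ioo (0:ℝ) 1, 1 / (1 + x * y * z))
      = ∑' k : ℕ, (z ^ (2*k) / (2*(k:ℝ)+1)^2 - z ^ (2*k+1) / (2*(k:ℝ)+2)^2) := by
    intro z hz
    rw [← step2 hz]
    apply MeasureTheory.setIntegral_congr_fun measurableSet_Ioo
    intro y _
    apply MeasureTheory.setIntegral_congr_fun measurableSet_Ioo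
    intro x _
    simp only [mul_assoc]
  rw [MeasureTheory.setIntegral_congr_fun measurableSet_Ioo hcongr, step3]
  -- Now the series identity : ∑ (1/(2k+1)^3 - 1/(2k+2)^3) = (3/4) ζ(3)
  set f : ℕ → ℝ := fun n => 1 / ((n:ℝ)+1)^3 with hf
  have hS : Summable f := cube_summable_aux
  have h1 : Summable fun k => f (2*k) :=
    hS.comp_injective (mul_right_injective₀ two_ne_zero)
  have h2 : Summable fun k => f (2*k+1) :=
    hS.comp_injective (fun a b h => by omega)
  have heo : (∑' k, f (2*k)) + ∑' k, f (2*k+1) = ∑' n, f n := tsum_even_add_odd h1 h2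
  have hodd : (∑' k, f (2*k+1)) = (1/8) * ∑' n, f n := by
    rw [← tsum_mul_left]
    refine tsum_congr fun k => ?_
    simp only [hf]
    have hk : ((k:ℝ)+1) ≠ 0 := by positivity
    push_cast
    field_simp
    ring
  have hkey : ∀ k : ℕ, 1 / (2*(k:ℝ)+1)^3 - 1 / (2*(k:ℝ)+2)^3 = f (2*k) - f (2*k+1) := by
    intro k; simp only [hf]; push_cast; ring
  rw [tsum_congr hkey, Summable.tsum_sub h1 h2, hodd]
  have hev : (∑' k, f (2*k)) = ∑' n, f n - (1/8) * ∑' n, f n := by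
    rw [← hodd]; linarith [heo]
  rw [hev]
  ring
end

section
/- Kontsevich–Zagier representation: ∫₀¹ ∫ₓ¹ ∫_y¹ 1/((1−x)·y·z) dz dy dx = ζ(3). -/
open MeasureTheory Set Real
open scoped Nat

/-!
Integrating out `z` and then `y` turns the integrand into `(log x)² / (2 (1 - x))`. Expanding
`1 / (1 - x)` as a geometric series, the `n`-th term integrates to `1 / (n + 1)³`: under
`x = exp (-t)` it becomes the Gamma integral `∫₀^∞ t² e^{-(n+1)t} dt / 2`. All terms are
nonnegative, so the sum and the integral may be interchanged.
-/

lemma integral_pow_mul_exp_neg_mul_Ioi (k : ℕ) {r : ℝ} (hr : 0 < r) :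
    ∫ t in Ioi (0:ℝ), t ^ k * exp (-(r * t)) = k ! / r ^ (k + 1) := by
  have h := integral_rpow_mul_exp_neg_mul_Ioi (a := k + 1) (by positivity) hr
  simp only [add_sub_cancel_right, rpow_natCast, Gamma_nat_eq_factorial] at h
  rw [h, div_rpow zero_le_one hr.le, one_rpow, ← Nat.cast_succ, rpow_natCast, div_mul_eq_mul_div,
    one_mul]

lemma integrableOn_pow_mul_exp_neg_mul_Ioi (k : ℕ) {r : ℝ} (hr : 0 < r) :
    IntegrableOn (fun t ↦ t ^ k * exp (-(r * t))) (Ioi 0) :=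
  .of_integral_ne_zero (by rw [integral_pow_mul_exp_neg_mul_Ioi k hr]; positivity)

lemma image_exp_neg_Ioi_zero : (fun t ↦ exp (-t)) '' Ioi 0 = Ioo 0 1 := by
  ext x
  constructor
  · rintro ⟨t, ht, rfl⟩
    exact ⟨exp_pos _, exp_lt_one_iff.mpr (neg_lt_zero.mpr ht)⟩
  · rintro ⟨hx0, hx1⟩
    exact ⟨-log x, neg_pos.mpr (log_neg hx0 hx1), by simp only [neg_neg, exp_log hx0]⟩

section ExpNegSubstitution

variable {E : Type*} [NormedAddCommGroup E] [NormedSpace ℝ E]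

lemma hasDerivWithinAt_exp_neg (s : Set ℝ) (t : ℝ) :
    HasDerivWithinAt (fun t ↦ exp (-t)) (-exp (-t)) s t := by
  simpa using ((hasDerivAt_neg t).exp).hasDerivWithinAt

lemma injOn_exp_neg (s : Set ℝ) : InjOn (fun t ↦ exp (-t)) s :=
  fun _ _ _ _ h ↦ neg_injective (exp_injective h)

lemma integral_Ioo_zero_one_eq_integral_Ioi_exp_neg (f : ℝ → E) :
    ∫ x in Ioo 0 1, f x = ∫ t in Ioi 0, exp (-t) • f (exp (-t)) := by
  rw [← image_exp_neg_Ioi_zero, integral_image_eq_integral_abs_deriv_smul measurableSet_Ioi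
    (fun t _ ↦ hasDerivWithinAt_exp_neg _ t) (injOn_exp_neg _)]
  simp only [abs_neg, abs_of_pos (exp_pos _)]

lemma integrableOn_Ioo_zero_one_iff_exp_neg (f : ℝ → E) :
    IntegrableOn f (Ioo 0 1) ↔ IntegrableOn (fun t ↦ exp (-t) • f (exp (-t))) (Ioi 0) := by
  rw [← image_exp_neg_Ioi_zero, integrableOn_image_iff_integrableOn_abs_deriv_smul
    measurableSet_Ioi (fun t _ ↦ hasDerivWithinAt_exp_neg _ t) (injOn_exp_neg _)]
  simp only [abs_neg, abs_of_pos (exp_pos _)]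

end ExpNegSubstitution

lemma exp_neg_smul_pow_mul_neg_log_pow_exp_neg (n k : ℕ) (t : ℝ) :
    exp (-t) • (exp (-t) ^ n * (-log (exp (-t))) ^ k) = t ^ k * exp (-((n + 1) * t)) := by
  rw [log_exp, neg_neg, smul_eq_mul, ← exp_nat_mul, show -((n + 1) * t) = -t + n * -t by ring,
    exp_add]
  ring

lemma integral_Ioo_pow_mul_neg_log_pow (n k : ℕ) :
    ∫ x in Ioo 0 1, x ^ n * (-log x) ^ k = k ! / ((n:ℝ) + 1) ^ (k + 1) := by
  simp only [integral_Ioo_zero_one_eq_integral_Ioi_exp_neg, exp_neg_smul_pow_mul_neg_log_pow_exp_neg]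
  exact integral_pow_mul_exp_neg_mul_Ioi k (by positivity)

lemma integrableOn_Ioo_pow_mul_neg_log_pow (n k : ℕ) :
    IntegrableOn (fun x ↦ x ^ n * (-log x) ^ k) (Ioo 0 1) := by
  simp only [integrableOn_Ioo_zero_one_iff_exp_neg, exp_neg_smul_pow_mul_neg_log_pow_exp_neg]
  exact integrableOn_pow_mul_exp_neg_mul_Ioi k (by positivity)

lemma integral_Ioo_inv_eq_neg_log {y : ℝ} (hy : 0 < y) (hy1 : y ≤ 1) :
    ∫ z in Ioo y 1, z⁻¹ = -log y := by
  rw [← integral_Ioc_eq_integral_Ioo, ← intervalIntegral.integral_of_le hy1,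
    integral_inv_of_pos hy one_pos, one_div, log_inv]

lemma integral_Ioo_neg_log_div_self {x : ℝ} (hx : 0 < x) (hx1 : x ≤ 1) :
    ∫ y in Ioo x 1, -log y / y = (-log x) ^ 2 / 2 := by
  have hpos : ∀ y ∈ uIcc x 1, 0 < y := fun y hy ↦ hx.trans_le (by simpa [hx1] using hy.1)
  have hderiv : ∀ y ∈ uIcc x 1, HasDerivAt (fun y ↦ -log y ^ 2 / 2) (-log y / y) y := fun y hy ↦
    (((hasDerivAt_log (hpos y hy).ne').pow 2).neg.div_const 2).congr_deriv
      (by simp only [Nat.cast_ofNat, Nat.add_one_sub_one, pow_one]; ring)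
  have hcont : ContinuousOn (fun y ↦ -log y / y) (uIcc x 1) :=
    (continuousOn_log.mono fun y hy ↦ (hpos y hy).ne').neg.div continuousOn_id
      fun y hy ↦ (hpos y hy).ne'
  rw [← integral_Ioc_eq_integral_Ioo, ← intervalIntegral.integral_of_le hx1,
    intervalIntegral.integral_eq_sub_of_hasDerivAt hderiv hcont.intervalIntegrable, log_one]
  ring

lemma integral_Ioo_integral_Ioo_one_div_mul {x : ℝ} (hx : x ∈ Ioo 0 1) :
    ∫ y in Ioo x 1, ∫ z in Ioo y 1, 1 / ((1 - x) * y * z) = (1 - x)⁻¹ * ((-log x) ^ 2 / 2) := by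
  calc ∫ y in Ioo x 1, ∫ z in Ioo y 1, 1 / ((1 - x) * y * z)
      = ∫ y in Ioo x 1, (1 - x)⁻¹ * (-log y / y) := by
        refine setIntegral_congr_fun measurableSet_Ioo fun y hy ↦ ?_
        simp_rw [one_div, mul_inv]
        rw [integral_const_mul, integral_Ioo_inv_eq_neg_log (hx.1.trans hy.1) hy.2.le]
        ring
    _ = (1 - x)⁻¹ * ((-log x) ^ 2 / 2) := by
        rw [integral_const_mul, integral_Ioo_neg_log_div_self hx.1 hx.2.le]

lemma integral_tsum_of_nonneg {ι α : Type*} [Countable ι] [MeasurableSpace α] {μ : Measure α}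
    {F : ι → α → ℝ} (hint : ∀ n, Integrable (F n) μ) (hnonneg : ∀ n, 0 ≤ᵐ[μ] F n)
    (hsum : Summable fun n ↦ ∫ a, F n a ∂μ) :
    ∫ a, ∑' n, F n a ∂μ = ∑' n, ∫ a, F n a ∂μ := by
  have hnorm : ∀ n, ∫ a, ‖F n a‖ ∂μ = ∫ a, F n a ∂μ := fun n ↦
    integral_congr_ae ((hnonneg n).mono fun a ha ↦ Real.norm_of_nonneg ha)
  exact (integral_tsum_of_summable_integral_norm hint (by simpa only [hnorm] using hsum)).symm

theorem kontsevich_zagier :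
    (∫ x in Set.Ioo (0:ℝ) 1, ∫ y in Set.Ioo x 1, ∫ z in Set.Ioo y 1,
      1 / ((1 - x) * y * z))
    = ∑' n : ℕ, 1 / ((n:ℝ) + 1) ^ 3 := by
  have hterm (n : ℕ) : ∫ x in Ioo (0:ℝ) 1, x ^ n * (-log x) ^ 2 / 2 = 1 / ((n:ℝ) + 1) ^ 3 := by
    rw [integral_div, integral_Ioo_pow_mul_neg_log_pow, Nat.factorial_two]
    ring
  calc _ = ∫ x in Ioo (0:ℝ) 1, ∑' n : ℕ, x ^ n * (-log x) ^ 2 / 2 := by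
        refine setIntegral_congr_fun measurableSet_Ioo fun x hx ↦ ?_
        rw [integral_Ioo_integral_Ioo_one_div_mul hx, ← tsum_geometric_of_lt_one hx.1.le hx.2,
          ← tsum_mul_right]
        simp_rw [mul_div_assoc]
    _ = ∑' n : ℕ, ∫ x in Ioo (0:ℝ) 1, x ^ n * (-log x) ^ 2 / 2 :=
        integral_tsum_of_nonneg (fun n ↦ (integrableOn_Ioo_pow_mul_neg_log_pow n 2).div_const 2)
          (fun n ↦ ae_restrict_of_forall_mem measurableSet_Ioo fun x hx ↦ by
            have := hx.1; positivity)
          (by simpa only [hterm, Nat.cast_add, Nat.cast_one] using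
            (summable_nat_add_iff 1).mpr (summable_one_div_nat_pow.mpr (by norm_num)))
    _ = _ := tsum_congr hterm
end

section
/- For x ∈ (0,1), ∫₀ˣ (log t)²/(1−t²) dt = Li₃(x) − Li₃(−x) − (log x)·(Li₂(x) − Li₂(−x)) + (1/2)(log x)²·log((1+x)/(1−x)). -/
noncomputable def Li (s : ℕ) (w : ℝ) : ℝ := ∑' n : ℕ, w ^ (n + 1) / ((n:ℝ) + 1) ^ s

/-!
Expanding `1 / (1 - c t) = ∑ (c t)ⁿ` and integrating term by term, with the explicit primitive
`tⁿ⁺¹ ((log t)² / (n+1) - 2 log t / (n+1)² + 2 / (n+1)³)` of `tⁿ (log t)²`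
(which vanishes at `0`), gives
`c ∫₀ˣ (log t)² / (1 - c t) dt = (log x)² Li₁(cx) - 2 log x Li₂(cx) + 2 Li₃(cx)`,
where `Li₁(w) = -log (1 - w)`. Since `1 / (1 - t²)` is the average of `1 / (1 - t)` and
`1 / (1 + t)`, the theorem is half the difference of the cases `c = 1` and `c = -1`.
-/

open MeasureTheory Real Set Filter Topology

noncomputable def primitivePowMulLogSq (n : ℕ) (t : ℝ) : ℝ :=
  t ^ (n + 1) *
    (log t ^ 2 / ((n : ℝ) + 1) - 2 * log t / ((n : ℝ) + 1) ^ 2 + 2 / ((n : ℝ) + 1) ^ 3)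

lemma tendsto_pow_mul_log_pow_nhdsGT_zero {m : ℕ} (hm : 0 < m) (k : ℕ) :
    Tendsto (fun t => t ^ m * log t ^ k) (𝓝[>] 0) (𝓝 0) := by
  rcases k.eq_zero_or_pos with rfl | hk
  · simpa using ((continuous_pow m).tendsto' 0 0 (zero_pow hm.ne')).mono_left nhdsWithin_le_nhds
  · have h := (tendsto_log_mul_rpow_nhdsGT_zero (r := m / k) (by positivity)).pow k
    rw [zero_pow hk.ne'] at h
    refine h.congr' (eventually_mem_nhdsWithin.mono fun t (ht : 0 < t) => ?_)
    rw [mul_pow, ← rpow_mul_natCast ht.le, div_mul_cancel₀ _ (by positivity), rpow_natCast,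
      mul_comm]

lemma hasDerivAt_primitivePowMulLogSq (n : ℕ) {t : ℝ} (ht : t ≠ 0) :
    HasDerivAt (primitivePowMulLogSq n) (t ^ n * log t ^ 2) t := by
  have hlog := hasDerivAt_log ht
  have h := (hasDerivAt_pow (n + 1) t).fun_mul
    ((((hlog.fun_pow 2).div_const ((n : ℝ) + 1)).fun_sub
      ((hlog.const_mul 2).div_const (((n : ℝ) + 1) ^ 2))).add_const (2 / ((n : ℝ) + 1) ^ 3))
  refine h.congr_deriv ?_
  rw [Nat.add_sub_cancel]
  field_simp
  push_cast
  ring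

lemma continuousOn_primitivePowMulLogSq (n : ℕ) :
    ContinuousOn (primitivePowMulLogSq n) (Ici 0) := by
  intro t ht
  rcases (mem_Ici.mp ht).eq_or_lt with rfl | ht
  · have h k := tendsto_pow_mul_log_pow_nhdsGT_zero (m := n + 1) n.succ_pos k
    have h0 := (((h 2).const_mul ((n : ℝ) + 1)⁻¹).sub
      ((h 1).const_mul (2 / ((n : ℝ) + 1) ^ 2))).add ((h 0).const_mul (2 / ((n : ℝ) + 1) ^ 3))
    simp only [mul_zero, sub_zero, add_zero] at h0
    refine continuousWithinAt_Ioi_iff_Ici.mp ?_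
    rw [ContinuousWithinAt, show primitivePowMulLogSq n 0 = 0 by simp [primitivePowMulLogSq]]
    exact h0.congr fun t => by simp only [primitivePowMulLogSq]; ring
  · exact (hasDerivAt_primitivePowMulLogSq n ht.ne').continuousAt.continuousWithinAt

lemma integrableOn_pow_mul_log_sq (n : ℕ) (x : ℝ) :
    IntegrableOn (fun t => t ^ n * log t ^ 2) (Icc 0 x) :=
  (integrableOn_Icc_iff_integrableOn_Ioc).mpr <| intervalIntegral.integrableOn_deriv_of_nonneg
    ((continuousOn_primitivePowMulLogSq n).mono Icc_subset_Ici_self)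
    (fun t ht => hasDerivAt_primitivePowMulLogSq n ht.1.ne')
    (fun t ht => mul_nonneg (pow_nonneg ht.1.le n) (sq_nonneg _))

lemma setIntegral_pow_mul_log_sq (n : ℕ) {x : ℝ} (hx : 0 ≤ x) :
    ∫ t in Ioo 0 x, t ^ n * log t ^ 2 = primitivePowMulLogSq n x := by
  rw [← integral_Ioc_eq_integral_Ioo, ← intervalIntegral.integral_of_le hx,
    intervalIntegral.integral_eq_sub_of_hasDerivAt_of_le hx
      ((continuousOn_primitivePowMulLogSq n).mono Icc_subset_Ici_self)
      (fun t ht => hasDerivAt_primitivePowMulLogSq n ht.1.ne')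
      ((intervalIntegrable_iff_integrableOn_Icc_of_le hx).mpr (integrableOn_pow_mul_log_sq n x))]
  simp [primitivePowMulLogSq]

lemma hasSum_Li (s : ℕ) {w : ℝ} (hw : |w| < 1) :
    HasSum (fun n : ℕ => w ^ (n + 1) / ((n : ℝ) + 1) ^ s) (Li s w) := by
  refine (Summable.of_norm_bounded
    ((summable_geometric_of_lt_one (abs_nonneg w) hw).mul_left |w|) fun n => ?_).hasSum
  rw [norm_div, norm_pow, norm_pow, norm_eq_abs, ← pow_succ']
  exact div_le_self (by positivity)
    (one_le_pow₀ ((le_add_of_nonneg_left n.cast_nonneg).trans (le_abs_self _)))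

lemma Li_one {w : ℝ} (hw : |w| < 1) : Li 1 w = -log (1 - w) :=
  (hasSum_Li 1 hw).unique (by simpa using hasSum_pow_div_log_of_abs_lt_one hw)

lemma hasSum_pow_mul_primitivePowMulLogSq {c x : ℝ} (hcx : |c * x| < 1) :
    HasSum (fun n => c ^ (n + 1) * primitivePowMulLogSq n x)
      (log x ^ 2 * Li 1 (c * x) - 2 * log x * Li 2 (c * x) + 2 * Li 3 (c * x)) := by
  refine ((((hasSum_Li 1 hcx).mul_left (log x ^ 2)).sub
    ((hasSum_Li 2 hcx).mul_left (2 * log x))).add ((hasSum_Li 3 hcx).mul_left 2)).congr_fun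
    fun n => ?_
  simp only [primitivePowMulLogSq]
  ring

lemma abs_mul_lt_one_of_mem_Icc {c x t : ℝ} (ht : t ∈ Icc 0 x) (hcx : |c * x| < 1) :
    |c * t| < 1 := by
  rw [abs_mul, abs_of_nonneg ht.1]
  rw [abs_mul, abs_of_nonneg (ht.1.trans ht.2)] at hcx
  exact (mul_le_mul_of_nonneg_left ht.2 (abs_nonneg c)).trans_lt hcx

lemma integrableOn_log_sq_div_one_sub_mul {c x : ℝ} (hcx : |c * x| < 1) :
    IntegrableOn (fun t => log t ^ 2 / (1 - c * t)) (Ioo 0 x) := by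
  have hne : ∀ t ∈ Icc 0 x, 1 - c * t ≠ 0 := fun t ht =>
    (sub_pos.mpr (abs_lt.mp (abs_mul_lt_one_of_mem_Icc ht hcx)).2).ne'
  have h := (integrableOn_pow_mul_log_sq 0 x).mul_continuousOn
    ((continuousOn_const.sub (continuousOn_const.mul continuousOn_id)).inv₀ hne) isCompact_Icc
  simpa [div_eq_mul_inv] using h.mono_set Ioo_subset_Icc_self

lemma mul_setIntegral_log_sq_div_one_sub_mul {c x : ℝ} (hx : 0 ≤ x) (hcx : |c * x| < 1) :
    c * ∫ t in Ioo 0 x, log t ^ 2 / (1 - c * t)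
      = log x ^ 2 * Li 1 (c * x) - 2 * log x * Li 2 (c * x) + 2 * Li 3 (c * x) := by
  set F : ℕ → ℝ → ℝ := fun n t => c ^ (n + 1) * (t ^ n * log t ^ 2)
  have hF_int n : IntegrableOn (F n) (Ioo 0 x) :=
    ((integrableOn_pow_mul_log_sq n x).mono_set Ioo_subset_Icc_self).const_mul _
  have hF_integral n : ∫ t in Ioo 0 x, F n t = c ^ (n + 1) * primitivePowMulLogSq n x := by
    rw [integral_const_mul, setIntegral_pow_mul_log_sq n hx]
  have hF_norm n : ∫ t in Ioo 0 x, ‖F n t‖ = |c| ^ (n + 1) * primitivePowMulLogSq n x := by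
    rw [← setIntegral_pow_mul_log_sq n hx, ← integral_const_mul]
    refine setIntegral_congr_fun measurableSet_Ioo fun t ht => ?_
    simp [F, abs_of_pos ht.1]
  have hF_tsum : ∀ t ∈ Ioo 0 x, ∑' n, F n t = c * (log t ^ 2 / (1 - c * t)) := fun t ht => by
    rw [div_eq_mul_inv, ← tsum_geometric_of_abs_lt_one
      (abs_mul_lt_one_of_mem_Icc (Ioo_subset_Icc_self ht) hcx), ← tsum_mul_left,
      ← tsum_mul_left]
    exact tsum_congr fun n => by ring
  have hnorm_summable : Summable fun n => ∫ t in Ioo 0 x, ‖F n t‖ := by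
    simp only [hF_norm]
    exact (hasSum_pow_mul_primitivePowMulLogSq (c := |c|)
      (by rwa [abs_mul, abs_abs, ← abs_mul])).summable
  have h := hasSum_integral_of_summable_integral_norm hF_int hnorm_summable
  simp only [hF_integral] at h
  rw [← integral_const_mul, ← setIntegral_congr_fun measurableSet_Ioo hF_tsum]
  exact h.unique (hasSum_pow_mul_primitivePowMulLogSq hcx)

theorem integral_log_sq_div (x : ℝ) (hx0 : 0 < x) (hx1 : x < 1) :
    (∫ t in Set.Ioo (0:ℝ) x, (Real.log t) ^ 2 / (1 - t ^ 2))
    = Li 3 x - Li 3 (-x) - Real.log x * (Li 2 x - Li 2 (-x))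
      + (1/2) * (Real.log x) ^ 2 * Real.log ((1 + x) / (1 - x)) := by
  have hx : |1 * x| < 1 := by rw [one_mul, abs_lt]; constructor <;> linarith
  have hx' : |-1 * x| < 1 := by simpa using hx
  have h_one := mul_setIntegral_log_sq_div_one_sub_mul hx0.le hx
  have h_neg_one := mul_setIntegral_log_sq_div_one_sub_mul hx0.le hx'
  have hsplit : ∫ t in Ioo 0 x, log t ^ 2 / (1 - t ^ 2)
      = ((∫ t in Ioo 0 x, log t ^ 2 / (1 - 1 * t))
          + ∫ t in Ioo 0 x, log t ^ 2 / (1 - -1 * t)) / 2 := by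
    rw [← integral_add (integrableOn_log_sq_div_one_sub_mul hx)
      (integrableOn_log_sq_div_one_sub_mul hx'), ← integral_div]
    refine setIntegral_congr_fun measurableSet_Ioo fun t ht => ?_
    have : 1 - t ≠ 0 := by linarith [ht.2]
    have : 1 + t ≠ 0 := by linarith [ht.1]
    rw [one_mul, neg_one_mul, sub_neg_eq_add, show 1 - t ^ 2 = (1 - t) * (1 + t) by ring]
    field_simp
    ring
  rw [Li_one hx] at h_one
  rw [Li_one hx'] at h_neg_one
  rw [hsplit, log_div (by linarith) (by linarith)]
  simp only [one_mul, neg_one_mul, sub_neg_eq_add] at h_one h_neg_one ⊢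
  linear_combination (h_one - h_neg_one) / 2
end

section
/- Li₃(1/2) = (7/8)·ζ(3) − (π²/12)·log 2 + (1/6)·(log 2)³, where Li₃(w) = ∑_{n≥1} wⁿ/n³. -/
/-!
Since `d/dx Li (s + 1) x = Li s x / x` and `Li 1 x = -log (1 - x)`, the functional equation
`Li₃ x + Li₃ (1 - x) + Li₃ (1 - 1/x) = ζ(3) + log³ x / 6 + π²/6 · log x - log² x · log (1 - x) / 2`
on `[1/2, 1]` follows by showing that the difference of the two sides has zero derivative and
comparing with `x = 1`. The derivative vanishes once `Li₂` is eliminated by Euler's reflection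
`Li₂ x + Li₂ (1 - x) = π²/6 - log x · log (1 - x)` and Landen's
`Li₂ (1 - 1/x) = -Li₂ (1 - x) - log² x / 2`, both proved the same way. At `x = 1/2` the
equation involves `Li₃ (-1)`, and splitting the series into even and odd terms gives
`Li₃ 1 + Li₃ (-1) = Li₃ 1 / 4`.
-/

open Real Filter Set Topology

lemma summable_one_div_nat_add_one_pow {s : ℕ} (hs : 2 ≤ s) :
    Summable fun n : ℕ => 1 / ((n : ℝ) + 1) ^ s := by
  simpa using (summable_nat_add_iff 1).mpr (summable_one_div_nat_pow.mpr hs)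

lemma norm_pow_succ_div_le {s : ℕ} {w : ℝ} (hw : |w| ≤ 1) (n : ℕ) :
    ‖w ^ (n + 1) / ((n : ℝ) + 1) ^ s‖ ≤ 1 / ((n : ℝ) + 1) ^ s := by
  rw [norm_div, norm_pow, norm_pow, Real.norm_eq_abs, Real.norm_of_nonneg (by positivity)]
  gcongr
  exact pow_le_one₀ (abs_nonneg w) hw

lemma summable_Li {s : ℕ} (hs : 2 ≤ s) {w : ℝ} (hw : |w| ≤ 1) :
    Summable fun n : ℕ => w ^ (n + 1) / ((n : ℝ) + 1) ^ s :=
  .of_norm_bounded (summable_one_div_nat_add_one_pow hs) (norm_pow_succ_div_le hw)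

lemma continuousOn_Li {s : ℕ} (hs : 2 ≤ s) : ContinuousOn (Li s) (Icc (-1) 1) :=
  continuousOn_tsum (fun _ => (continuousOn_pow _).div_const _)
    (summable_one_div_nat_add_one_pow hs) fun _ _ hw => norm_pow_succ_div_le (abs_le.mpr hw) _

lemma ContinuousOn.Li {s : ℕ} (hs : 2 ≤ s) {f : ℝ → ℝ} {t : Set ℝ} (hf : ContinuousOn f t)
    (hmaps : MapsTo f t (Icc (-1) 1)) : ContinuousOn (fun y => Li s (f y)) t :=
  (continuousOn_Li hs).comp hf hmaps

@[simp] lemma Li_zero (s : ℕ) : Li s 0 = 0 := by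
  simp [Li]

lemma Li_one_s15 (s : ℕ) : Li s 1 = ∑' n : ℕ, 1 / ((n : ℝ) + 1) ^ s := by
  simp [Li]

lemma Li_two_one : Li 2 1 = π ^ 2 / 6 := by
  have h := (hasSum_nat_add_iff (f := fun n : ℕ => 1 / (n : ℝ) ^ 2) 1).mpr
    (by simpa using hasSum_zeta_two)
  rw [Li_one_s15, ← h.tsum_eq]
  simp

lemma Li_one_eq_neg_log {x : ℝ} (hx : |x| < 1) : Li 1 x = -log (1 - x) := by
  simpa [Li] using (hasSum_pow_div_log_of_abs_lt_one hx).tsum_eq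

lemma hasDerivAt_Li_succ (s : ℕ) {x : ℝ} (hx : |x| < 1) (hx0 : x ≠ 0) :
    HasDerivAt (Li (s + 1)) (Li s x / x) x := by
  obtain ⟨r, hxr, hr1⟩ := exists_between hx
  have hr0 : 0 < r := (abs_nonneg x).trans_lt hxr
  have hderiv := hasDerivAt_tsum_of_isPreconnected (u := fun n : ℕ => r ^ n)
    (g := fun (n : ℕ) (z : ℝ) => z ^ (n + 1) / ((n : ℝ) + 1) ^ (s + 1))
    (g' := fun (n : ℕ) (z : ℝ) => z ^ n / ((n : ℝ) + 1) ^ s) (y₀ := 0)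
    (summable_geometric_of_lt_one hr0.le hr1) Metric.isOpen_ball
    (convex_ball (0 : ℝ) r).isPreconnected ?_ ?_ (Metric.mem_ball_self hr0) (by simp)
    (by simpa using hxr)
  · refine hderiv.congr_deriv ?_
    rw [eq_div_iff hx0, Li, ← tsum_mul_right]
    congr 1 with n
    ring
  · intro n y _
    refine ((hasDerivAt_pow (n + 1) y).div_const _).congr_deriv ?_
    push_cast
    rw [pow_succ]
    field_simp
  · intro n y hy
    rw [mem_ball_zero_iff, Real.norm_eq_abs] at hy
    rw [norm_div, norm_pow, norm_pow, Real.norm_eq_abs, Real.norm_of_nonneg (by positivity)]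
    have hn : (1 : ℝ) ≤ (n + 1) ^ s := one_le_pow₀ (by linarith [n.cast_nonneg (α := ℝ)])
    calc |y| ^ n / ((n : ℝ) + 1) ^ s ≤ |y| ^ n := div_le_self (by positivity) hn
      _ ≤ r ^ n := by gcongr

lemma HasDerivAt.Li_succ (s : ℕ) {f : ℝ → ℝ} {f' x : ℝ} (hf : HasDerivAt f f' x)
    (h1 : |f x| < 1) (h0 : f x ≠ 0) :
    HasDerivAt (fun y => Li (s + 1) (f y)) (Li s (f x) / f x * f') x :=
  (hasDerivAt_Li_succ s h1 h0).comp x hf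

lemma eq_of_hasDerivAt_eq_zero {f : ℝ → ℝ} {a b : ℝ} (hab : a ≤ b)
    (hf : ContinuousOn f (Icc a b)) (hf' : ∀ x ∈ Ioo a b, HasDerivAt f 0 x) : f a = f b := by
  rcases hab.eq_or_lt with rfl | hab
  · rfl
  obtain ⟨c, -, hc⟩ := exists_hasDerivAt_eq_slope f (fun _ => 0) hab hf hf'
  rw [eq_comm, div_eq_zero_iff, sub_eq_zero] at hc
  exact (hc.resolve_right (sub_ne_zero.mpr hab.ne')).symm

lemma tendsto_inv_mul_log_one_sub : Tendsto (fun t => t⁻¹ * log (1 - t)) (𝓝[≠] 0) (𝓝 (-1)) := by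
  have h : HasDerivAt (fun t => log (1 - t)) (-1) 0 := by
    simpa using ((hasDerivAt_id (0 : ℝ)).const_sub 1).log (by norm_num)
  simpa using h.tendsto_slope_zero

lemma continuousAt_log_mul_log_one_sub_zero : ContinuousAt (fun t => log t * log (1 - t)) 0 := by
  rw [← continuousWithinAt_compl_self, ContinuousWithinAt]
  have h := ((continuous_mul_log.tendsto 0).mono_left nhdsWithin_le_nhds).mul
    tendsto_inv_mul_log_one_sub
  simp only [zero_mul, log_zero] at h ⊢
  refine h.congr' (eventually_nhdsWithin_of_forall fun t (ht : t ≠ 0) => ?_)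
  field_simp

/-- With Lean's `log 0 = 0`: at a zero of either argument the other factor vanishes to first
order, and `t * log t → 0`. -/
lemma continuous_log_mul_log_one_sub : Continuous fun x => log x * log (1 - x) := by
  refine continuous_iff_continuousAt.mpr fun x => ?_
  by_cases hx0 : x = 0
  · exact hx0 ▸ continuousAt_log_mul_log_one_sub_zero
  by_cases hx1 : x = 1
  · subst hx1
    have h : ContinuousAt ((fun t => log t * log (1 - t)) ∘ fun y => 1 - y) 1 :=
      .comp (by simpa using continuousAt_log_mul_log_one_sub_zero)
        (continuousAt_const.sub continuousAt_id)
    simpa [Function.comp_def, mul_comm] using h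
  exact (continuousAt_log hx0).mul
    ((continuousAt_const.sub continuousAt_id).log (sub_ne_zero.mpr (Ne.symm hx1)))

lemma one_sub_inv_mem_Icc {y : ℝ} (hy : y ∈ Icc (1 / 2 : ℝ) 1) : 1 - y⁻¹ ∈ Icc (-1 : ℝ) 0 := by
  have : 1 ≤ y⁻¹ := one_le_inv_iff₀.mpr ⟨by linarith [hy.1], hy.2⟩
  have : y⁻¹ ≤ 2 := inv_le_of_inv_le₀ (by norm_num) (by linarith [hy.1])
  constructor <;> linarith

lemma one_sub_inv_mem_Ioo {y : ℝ} (hy : y ∈ Ioo (1 / 2 : ℝ) 1) : 1 - y⁻¹ ∈ Ioo (-1 : ℝ) 0 := by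
  have : 1 < y⁻¹ := (one_lt_inv₀ (by linarith [hy.1])).mpr hy.2
  have : y⁻¹ < 2 := inv_lt_of_inv_lt₀ (by norm_num) (by linarith [hy.1])
  constructor <;> linarith

lemma Li_two_add_Li_two_one_sub {x : ℝ} (hx : x ∈ Icc (0 : ℝ) 1) :
    Li 2 x + Li 2 (1 - x) + log x * log (1 - x) = π ^ 2 / 6 := by
  set H : ℝ → ℝ := fun y => Li 2 y + Li 2 (1 - y) + log y * log (1 - y)
  have hcont : ContinuousOn H (Icc 0 1) :=
    (((continuousOn_Li le_rfl).mono (Icc_subset_Icc (by norm_num) le_rfl)).add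
      (ContinuousOn.Li (f := fun y => 1 - y) le_rfl (by fun_prop)
        fun y hy => ⟨by linarith [hy.2], by linarith [hy.1]⟩)).add
      continuous_log_mul_log_one_sub.continuousOn
  have hderiv : ∀ y ∈ Ioo (0 : ℝ) 1, HasDerivAt H 0 y := by
    intro y ⟨hy0, hy1⟩
    have hy : |y| < 1 := abs_lt.mpr ⟨by linarith, hy1⟩
    have hy' : |1 - y| < 1 := abs_lt.mpr ⟨by linarith, by linarith⟩
    have hsub := (hasDerivAt_id' y).const_sub 1
    have h := ((hasDerivAt_Li_succ 1 hy hy0.ne').add (hsub.Li_succ 1 hy' (by linarith))).add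
      ((hasDerivAt_log hy0.ne').mul (hsub.log (by linarith)))
    refine h.congr_deriv ?_
    rw [Li_one_eq_neg_log hy, Li_one_eq_neg_log hy', sub_sub_cancel]
    field_simp
    ring
  have h := eq_of_hasDerivAt_eq_zero hx.1 (hcont.mono (Icc_subset_Icc le_rfl hx.2))
    fun y hy => hderiv y ⟨hy.1, hy.2.trans_le hx.2⟩
  simpa [H, Li_two_one] using h.symm

lemma Li_two_one_sub_inv {x : ℝ} (hx : x ∈ Icc (1 / 2 : ℝ) 1) :
    Li 2 (1 - x⁻¹) = -Li 2 (1 - x) - log x ^ 2 / 2 := by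
  set K : ℝ → ℝ := fun y => Li 2 (1 - y⁻¹) + Li 2 (1 - y) + log y ^ 2 / 2
  have hcont : ContinuousOn K (Icc (1 / 2) 1) := by
    have hpos : ∀ y ∈ Icc (1 / 2 : ℝ) 1, y ≠ 0 := fun y hy => by linarith [hy.1]
    exact ((ContinuousOn.Li (f := fun y => 1 - y⁻¹) le_rfl
      (continuousOn_const.sub (continuousOn_inv₀.mono hpos))
      fun y hy => Icc_subset_Icc le_rfl zero_le_one (one_sub_inv_mem_Icc hy)).add
      (ContinuousOn.Li (f := fun y => 1 - y) le_rfl (by fun_prop)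
        fun y hy => ⟨by linarith [hy.2], by linarith [hy.1]⟩)).add
      (((continuousOn_log.mono hpos).pow 2).div_const 2)
  have hderiv : ∀ y ∈ Ioo (1 / 2 : ℝ) 1, HasDerivAt K 0 y := by
    intro y ⟨hy0, hy1⟩
    have hy : y ≠ 0 := by linarith
    obtain ⟨hu0, hu1⟩ := one_sub_inv_mem_Ioo ⟨hy0, hy1⟩
    have hu : |1 - y⁻¹| < 1 := abs_lt.mpr ⟨hu0, by linarith⟩
    have hy' : |1 - y| < 1 := abs_lt.mpr ⟨by linarith, by linarith⟩
    have h := ((((hasDerivAt_inv hy).const_sub 1).Li_succ 1 hu hu1.ne).add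
      (((hasDerivAt_id' y).const_sub 1).Li_succ 1 hy' (by linarith))).add
      (((hasDerivAt_log hy).pow 2).div_const 2)
    refine h.congr_deriv ?_
    rw [Li_one_eq_neg_log hu, Li_one_eq_neg_log hy', sub_sub_cancel, sub_sub_cancel, log_inv]
    have : y - 1 ≠ 0 := by linarith
    have : 1 - y ≠ 0 := by linarith
    field_simp
    ring
  have h := eq_of_hasDerivAt_eq_zero hx.2 (hcont.mono (Icc_subset_Icc hx.1 le_rfl))
    fun y hy => hderiv y ⟨hx.1.trans_lt hy.1, hy.2⟩
  simp only [K, inv_one, sub_self, Li_zero, log_one] at h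
  linarith

lemma Li_three_add_Li_three_one_sub_add_Li_three_one_sub_inv {x : ℝ}
    (hx : x ∈ Icc (1 / 2 : ℝ) 1) :
    Li 3 x + Li 3 (1 - x) + Li 3 (1 - x⁻¹)
      = Li 3 1 + log x ^ 3 / 6 + π ^ 2 / 6 * log x - log x ^ 2 * log (1 - x) / 2 := by
  -- the last term is grouped so that its continuity at `y = 1` is `continuous_log_mul_log_one_sub`
  set G : ℝ → ℝ := fun y => Li 3 y + Li 3 (1 - y) + Li 3 (1 - y⁻¹)
    - log y ^ 3 / 6 - π ^ 2 / 6 * log y + log y * (log y * log (1 - y)) / 2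
  have hcont : ContinuousOn G (Icc (1 / 2) 1) := by
    have hpos : ∀ y ∈ Icc (1 / 2 : ℝ) 1, y ≠ 0 := fun y hy => by linarith [hy.1]
    have hlog := continuousOn_log.mono hpos
    have hLi₁ := (continuousOn_Li (s := 3) (by norm_num)).mono
      (Icc_subset_Icc (by norm_num) le_rfl : Icc (1 / 2 : ℝ) 1 ⊆ Icc (-1) 1)
    have hLi₂ := ContinuousOn.Li (s := 3) (f := fun y => 1 - y) (t := Icc (1 / 2) 1)
      (by norm_num) (by fun_prop) fun y hy => ⟨by linarith [hy.2], by linarith [hy.1]⟩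
    have hLi₃ := ContinuousOn.Li (s := 3) (f := fun y => 1 - y⁻¹) (by norm_num)
      (continuousOn_const.sub (continuousOn_inv₀.mono hpos))
      fun y hy => Icc_subset_Icc le_rfl zero_le_one (one_sub_inv_mem_Icc hy)
    exact ((((hLi₁.add hLi₂).add hLi₃).sub ((hlog.pow 3).div_const 6)).sub
      (continuousOn_const.mul hlog)).add
      ((hlog.mul continuous_log_mul_log_one_sub.continuousOn).div_const 2)
  have hderiv : ∀ y ∈ Ioo (1 / 2 : ℝ) 1, HasDerivAt G 0 y := by
    intro y ⟨hy0, hy1⟩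
    have hy : y ≠ 0 := by linarith
    obtain ⟨hu0, hu1⟩ := one_sub_inv_mem_Ioo ⟨hy0, hy1⟩
    have hsub := (hasDerivAt_id' y).const_sub 1
    have hlog := hasDerivAt_log hy
    have h := (((((hasDerivAt_Li_succ 2 (abs_lt.mpr ⟨by linarith, hy1⟩) hy).add
      (hsub.Li_succ 2 (abs_lt.mpr ⟨by linarith, by linarith⟩) (by linarith))).add
      (((hasDerivAt_inv hy).const_sub 1).Li_succ 2 (abs_lt.mpr ⟨hu0, by linarith⟩) hu1.ne)).sub
      ((hlog.pow 3).div_const 6)).sub (hlog.const_mul (π ^ 2 / 6))).add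
      ((hlog.mul (hlog.mul (hsub.log (by linarith)))).div_const 2)
    refine h.congr_deriv ?_
    have hrefl := Li_two_add_Li_two_one_sub (x := y) ⟨by linarith, hy1.le⟩
    rw [show Li 2 y = π ^ 2 / 6 - Li 2 (1 - y) - log y * log (1 - y) by linarith,
      Li_two_one_sub_inv ⟨hy0.le, hy1.le⟩]
    simp only [Pi.mul_apply]
    have : y - 1 ≠ 0 := by linarith
    have : 1 - y ≠ 0 := by linarith
    have := hu1.ne
    push_cast
    field_simp
    ring
  have h := eq_of_hasDerivAt_eq_zero hx.2 (hcont.mono (Icc_subset_Icc hx.1 le_rfl))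
    fun y hy => hderiv y ⟨hx.1.trans_lt hy.1, hy.2⟩
  simp only [G, inv_one, sub_self, Li_zero, log_one] at h
  linarith

lemma Li_add_Li_neg {s : ℕ} (hs : 2 ≤ s) {x : ℝ} (hx : |x| ≤ 1) :
    Li s x + Li s (-x) = 2 / 2 ^ s * Li s (x ^ 2) := by
  set f : ℕ → ℝ := fun n => x ^ (n + 1) / ((n : ℝ) + 1) ^ s + (-x) ^ (n + 1) / ((n : ℝ) + 1) ^ s
  have hsum : HasSum f (Li s x + Li s (-x)) :=
    (summable_Li hs hx).hasSum.add (summable_Li hs (by rwa [abs_neg])).hasSum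
  have heven : HasSum (fun k => f (2 * k)) 0 := by
    refine hasSum_zero.congr_fun fun k => ?_
    simp [f, Odd.neg_pow (⟨k, rfl⟩ : Odd (2 * k + 1)), neg_div]
  have hodd : HasSum (fun k => f (2 * k + 1)) (2 / 2 ^ s * Li s (x ^ 2)) := by
    have h : HasSum (fun n : ℕ => (x ^ 2) ^ (n + 1) / ((n : ℝ) + 1) ^ s) (Li s (x ^ 2)) :=
      (summable_Li hs (by rw [abs_pow]; exact pow_le_one₀ (n := 2) (abs_nonneg x) hx)).hasSum
    refine (h.mul_left (2 / 2 ^ s)).congr_fun fun k => ?_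
    simp only [f]
    rw [Even.neg_pow ⟨k + 1, by ring⟩]
    push_cast
    rw [show 2 * (k : ℝ) + 1 + 1 = 2 * (k + 1) by ring, mul_pow]
    field_simp
    ring
  exact hsum.unique (by simpa using heven.even_add_odd hodd)

theorem Li3_half :
    Li 3 (1/2)
    = (7/8) * (∑' n : ℕ, 1 / ((n:ℝ) + 1) ^ 3)
      - (Real.pi ^ 2 / 12) * Real.log 2 + (1/6) * (Real.log 2) ^ 3 := by
  have hfun := Li_three_add_Li_three_one_sub_add_Li_three_one_sub_inv (x := 1 / 2)
    ⟨le_rfl, by norm_num⟩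
  have hneg := Li_add_Li_neg (s := 3) (by norm_num) (x := 1) (by simp)
  have hlog : log (1 / 2 : ℝ) = -log 2 := by rw [one_div, log_inv]
  rw [← Li_one_s15]
  norm_num [hlog] at hfun hneg
  linear_combination (hfun - hneg) / 2
end
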